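/- arXiv:2511.08422 — 7 statements merged into one kernel-verified Lean document; each statement's English description precedes it below -/
import Mathlib

section
/- Let d ≥ 3 be an integer and let ζ_d = exp(2πi/d) ∈ ℂ. Then the number field K_d = ℚ(ζ_d − ζ_d⁻¹) is a CM-field: K_d admits no ring homomorphism into ℝ (it is totally imaginary), and there exists a subfield F of K_d that is totally real with [K_d : F] = 2. -/
open IntermediateField

set_option synthInstance.maxHeartbeats 1000000

/-- `zetaC d` is the primitive `d`-th root of unity `exp(2πi/d)` in `ℂ`. -/
noncomputable def zetaC (d : ℕ) : ℂ := Complex.exp (2 * Real.pi * Complex.I / d)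

/-!
Every complex embedding of `ℚ(ζ_d - ζ_d⁻¹)` extends to `ℚ(ζ_d)` and so sends `ζ_d` to a root of
unity `w`; hence it sends `α = ζ_d - ζ_d⁻¹` to `w - w̄ ∈ iℝ`, and `α ≠ 0` because
`Im α = 2 sin(2π/d) > 0` for `d ≥ 3`. A nonzero element with purely imaginary image under every
embedding rules out real embeddings, and makes `F = ℚ(α²)` totally real. Finally `α² ∈ F` while
`α ∉ F` (its images are not real), so `[ℚ(α) : F] = 2`.
-/

theorem Complex.re_sub_inv_eq_zero_of_norm_eq_one {w : ℂ} (hw : ‖w‖ = 1) :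
    (w - w⁻¹).re = 0 := by
  simp [Complex.inv_eq_conj hw]

theorem im_zetaC_sub_inv_pos {d : ℕ} (hd : 3 ≤ d) : 0 < (zetaC d - (zetaC d)⁻¹).im := by
  have hd0 : (0 : ℝ) < d := by positivity
  have hζ : zetaC d = Complex.exp ((2 * Real.pi / d : ℝ) * Complex.I) := by
    rw [zetaC]; push_cast; ring_nf
  have hsin : 0 < Real.sin (2 * Real.pi / d) := by
    apply Real.sin_pos_of_pos_of_lt_pi (by positivity)
    rw [div_lt_iff₀ hd0]
    nlinarith [Real.pi_pos, (show (3 : ℝ) ≤ d by exact_mod_cast hd)]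
  rw [hζ, ← Complex.exp_neg, Complex.sub_im, ← neg_mul, ← Complex.ofReal_neg,
    Complex.exp_ofReal_mul_I_im, Complex.exp_ofReal_mul_I_im, Real.sin_neg]
  linarith

theorem IntermediateField.adjoin_simple_gen_eq_top {F E : Type*} [Field F] [Field E] [Algebra F E] (α : E) :
    F⟮AdjoinSimple.gen F α⟯ = ⊤ := by
  apply lift_injective
  rw [lift_adjoin_simple, lift_top]
  rfl

theorem re_map_eq_zero_of_coe_eq_sub_inv {ζ : ℂ} {n : ℕ} (hn : n ≠ 0) (hζ : ζ ^ n = 1)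
    {K : IntermediateField ℚ ℂ} (hK : K ≤ ℚ⟮ζ⟯) {x : K} (hx : (x : ℂ) = ζ - ζ⁻¹)
    (φ : K →+* ℂ) : (φ x).re = 0 := by
  have hint : IsIntegral ℚ ζ := .of_pow (Nat.pos_of_ne_zero hn) (hζ ▸ isIntegral_one)
  obtain ⟨ψ, hψ⟩ := exists_algHom_adjoin_of_splits (S := {ζ})
    (fun s hs => ⟨hs ▸ hint, IsAlgClosed.splits _⟩) φ.toRatAlgHom hK
  have hψζ : ψ (AdjoinSimple.gen ℚ ζ) ^ n = 1 := by
    rw [← map_pow, show AdjoinSimple.gen ℚ ζ ^ n = 1 from Subtype.ext (by simp [hζ]), map_one]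
  have hincl : inclusion hK x = AdjoinSimple.gen ℚ ζ - (AdjoinSimple.gen ℚ ζ)⁻¹ :=
    Subtype.ext (by simp [hx])
  have hφx : φ x = ψ (AdjoinSimple.gen ℚ ζ) - (ψ (AdjoinSimple.gen ℚ ζ))⁻¹ := by
    rw [← map_inv₀, ← map_sub, ← hincl]
    exact (DFunLike.congr_fun hψ x).symm
  rw [hφx]
  exact Complex.re_sub_inv_eq_zero_of_norm_eq_one (Complex.norm_eq_one_of_pow_eq_one hψζ hn)

section
variable {K : Type*} [Field K] {x : K}

theorem isEmpty_ringHom_real_of_re_eq_zero (hx : x ≠ 0) (h : ∀ φ : K →+* ℂ, (φ x).re = 0) :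
    IsEmpty (K →+* ℝ) :=
  ⟨fun σ => hx <| (map_eq_zero σ).1 <| by simpa using h (Complex.ofRealHom.comp σ)⟩

variable [CharZero K]

theorem im_eq_zero_of_mem_adjoin_sq (h : ∀ φ : K →+* ℂ, (φ x).re = 0) (φ : K →+* ℂ) {y : K}
    (hy : y ∈ ℚ⟮x ^ 2⟯) : (φ y).im = 0 := by
  let R : IntermediateField ℚ ℂ := Complex.ofRealHom.toRatAlgHom.fieldRange
  have hR : ∀ z : ℂ, z ∈ R ↔ z.im = 0 := fun z =>
    ⟨fun ⟨r, hr⟩ => hr ▸ Complex.ofReal_im r, fun hz => ⟨z.re, Complex.ext (by simp) (by simp [hz])⟩⟩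
  have hsq : x ^ 2 ∈ R.comap φ.toRatAlgHom := by
    change φ.toRatAlgHom (x ^ 2) ∈ R
    rw [hR, RingHom.toRatAlgHom_apply, map_pow, sq, Complex.mul_im, h φ]
    ring
  exact (hR _).1 (adjoin_simple_le_iff.2 hsq hy)

end

theorem finrank_eq_two_of_sq_mem_bot {F L : Type*} [Field F] [Field L] [Algebra F L] {x : L}
    (htop : F⟮x⟯ = ⊤) (hsq : x ^ 2 ∈ (⊥ : IntermediateField F L))
    (hx : x ∉ (⊥ : IntermediateField F L)) : Module.finrank F L = 2 := by
  obtain ⟨c, hc⟩ := mem_bot.1 hsq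
  have hmonic := Polynomial.monic_X_pow_sub_C c two_ne_zero
  have hroot : Polynomial.aeval x (Polynomial.X ^ 2 - Polynomial.C c) = 0 := by simp [hc]
  have hint : IsIntegral F x := ⟨_, hmonic, hroot⟩
  rw [← finrank_top', ← htop, adjoin.finrank hint]
  refine le_antisymm ?_ ((minpoly.two_le_natDegree_iff hint).2 (by simpa [mem_bot] using hx))
  simpa using Polynomial.natDegree_le_of_dvd (minpoly.dvd F x hroot) hmonic.ne_zero

theorem exists_subfield_im_eq_zero_finrank_eq_two {K : Type*} [Field K] [CharZero K]
    [Algebra.IsAlgebraic ℚ K] {x : K} (hgen : ℚ⟮x⟯ = ⊤) (hx : x ≠ 0)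
    (h : ∀ φ : K →+* ℂ, (φ x).re = 0) :
    ∃ F : Subfield K, (∀ σ : F →+* ℂ, ∀ y : F, (σ y).im = 0) ∧ Module.finrank F K = 2 := by
  have hsplits (s : K) : IsIntegral ℚ s ∧ ((minpoly ℚ s).map (algebraMap ℚ ℂ)).Splits :=
    ⟨Algebra.IsIntegral.isIntegral s, IsAlgClosed.splits _⟩
  refine ⟨ℚ⟮x ^ 2⟯.toSubfield, fun σ y => ?_, ?_⟩
  · obtain ⟨φ, hφ⟩ := exists_algHom_of_splits hsplits σ.toRatAlgHom
    have hσ : σ y = φ y := (DFunLike.congr_fun hφ y).symm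
    rw [hσ]
    exact im_eq_zero_of_mem_adjoin_sq h φ y.2
  · have hx_notMem : x ∉ ℚ⟮x ^ 2⟯ := fun hmem => by
      obtain ⟨φ⟩ := nonempty_algHom_of_splits hsplits
      have him := im_eq_zero_of_mem_adjoin_sq h φ hmem
      exact hx ((map_eq_zero φ).1 (Complex.ext (h φ) him))
    change Module.finrank ℚ⟮x ^ 2⟯ K = 2
    refine finrank_eq_two_of_sq_mem_bot (adjoin_eq_top_of_adjoin_eq_top ℚ hgen)
      (mem_bot.2 ⟨AdjoinSimple.gen ℚ (x ^ 2), rfl⟩) fun hmem => hx_notMem ?_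
    obtain ⟨y, hy⟩ := mem_bot.1 hmem
    convert y.2
    exact hy.symm

/-- For `d ≥ 3`, the field `K_d = ℚ(ζ_d - ζ_d⁻¹)` is a CM-field: it is totally imaginary
(no ring homomorphism into `ℝ`), and it is a quadratic extension of a totally real
subfield `F`. -/
theorem stmt0 (d : ℕ) (hd : 3 ≤ d) (K : IntermediateField ℚ ℂ)
    (hK : K = ℚ⟮zetaC d - (zetaC d)⁻¹⟯) :
    IsEmpty (K →+* ℝ) ∧
    ∃ F : Subfield K,
      (∀ σ : F →+* ℂ, ∀ x : F, (σ x).im = 0) ∧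
      Module.finrank F K = 2 := by
  subst hK
  set ζ := zetaC d
  have hd0 : d ≠ 0 := by omega
  have hζ : ζ ^ d = 1 := (Complex.isPrimitiveRoot_exp d hd0).pow_eq_one
  have hle : ℚ⟮ζ - ζ⁻¹⟯ ≤ ℚ⟮ζ⟯ := adjoin_simple_le_iff.2 <|
    sub_mem (mem_adjoin_simple_self ℚ ζ) (inv_mem (mem_adjoin_simple_self ℚ ζ))
  have : FiniteDimensional ℚ ℚ⟮ζ⟯ :=
    adjoin.finiteDimensional (.of_pow (Nat.pos_of_ne_zero hd0) (hζ ▸ isIntegral_one))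
  have : FiniteDimensional ℚ ℚ⟮ζ - ζ⁻¹⟯ := adjoin.finiteDimensional <|
    isIntegral_iff.1 (IsIntegral.of_finite ℚ (⟨_, hle (mem_adjoin_simple_self ℚ _)⟩ : ℚ⟮ζ⟯))
  have hre := re_map_eq_zero_of_coe_eq_sub_inv hd0 hζ hle (x := AdjoinSimple.gen ℚ _) rfl
  have hx0 : AdjoinSimple.gen ℚ (ζ - ζ⁻¹) ≠ 0 := fun h =>
    (im_zetaC_sub_inv_pos hd).ne' <| by
      rw [← AdjoinSimple.coe_gen ℚ (ζ - ζ⁻¹), h]; rfl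
  exact ⟨isEmpty_ringHom_real_of_re_eq_zero hx0 hre,
    exists_subfield_im_eq_zero_finrank_eq_two (adjoin_simple_gen_eq_top _) hx0 hre⟩
end

section
/- Let d ≥ 1 be an integer with 4 ∤ d, and let ζ_d = exp(2πi/d) ∈ ℂ. Then ℚ(ζ_d − ζ_d⁻¹) = ℚ(ζ_d), i.e., the subfield of ℂ generated over ℚ by ζ_d − ζ_d⁻¹ equals the subfield generated by ζ_d. -/
open IntermediateField

lemma mem_adjoin_of_odd_root {z : ℂ} {m : ℕ} (hm : Odd m) (hz : z ^ m = 1) :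
    z ∈ (ℚ⟮z - z⁻¹⟯ : IntermediateField ℚ ℂ) := by
  have hz0 : z ≠ 0 := by
    intro h
    rw [h, zero_pow (by rintro rfl; simp at hm)] at hz
    exact zero_ne_one hz
  set K : IntermediateField ℚ ℂ := ℚ⟮z - z⁻¹⟯ with hK
  have ha : (z - z⁻¹) ∈ K := mem_adjoin_simple_self ℚ _
  have key : ∀ n : ℕ, ∃ p q : ℂ, p ∈ K ∧ q ∈ K ∧
      z ^ n = p * z + q ∧ (-z⁻¹) ^ n = p * (-z⁻¹) + q := by
    intro n
    induction n with
    | zero => exact ⟨0, 1, zero_mem K, one_mem K, by ring, by ring⟩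
    | succ n ih =>
      obtain ⟨p, q, hp, hq, h1, h2⟩ := ih
      refine ⟨p * (z - z⁻¹) + q, p, add_mem (mul_mem hp ha) hq, hp, ?_, ?_⟩
      · have hsq : z ^ 2 = (z - z⁻¹) * z + 1 := by field_simp; ring
        calc z ^ (n + 1) = z ^ n * z := by ring
          _ = (p * z + q) * z := by rw [h1]
          _ = p * z ^ 2 + q * z := by ring
          _ = p * ((z - z⁻¹) * z + 1) + q * z := by rw [hsq]
          _ = (p * (z - z⁻¹) + q) * z + p := by ring
      · have hsq : (-z⁻¹) ^ 2 = (z - z⁻¹) * (-z⁻¹) + 1 := by field_simp; ring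
        calc (-z⁻¹) ^ (n + 1) = (-z⁻¹) ^ n * (-z⁻¹) := by ring
          _ = (p * (-z⁻¹) + q) * (-z⁻¹) := by rw [h2]
          _ = p * (-z⁻¹) ^ 2 + q * (-z⁻¹) := by ring
          _ = p * ((z - z⁻¹) * (-z⁻¹) + 1) + q * (-z⁻¹) := by rw [hsq]
          _ = (p * (z - z⁻¹) + q) * (-z⁻¹) + p := by ring
  obtain ⟨p, q, hp, hq, h1, h2⟩ := key m
  rw [hz] at h1
  have hz2 : (-z⁻¹) ^ m = -1 := by
    rw [hm.neg_pow, inv_pow, hz, inv_one]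
  rw [hz2] at h2
  have hp2 : p * (z + z⁻¹) = 2 := by linear_combination h2 - h1
  have hp0 : p ≠ 0 := by
    intro h; rw [h, zero_mul] at hp2; norm_num at hp2
  have hzval : z = (1 - q) * p⁻¹ := by
    field_simp
    linear_combination -h1
  rw [hzval]
  exact mul_mem (sub_mem (one_mem K) hq) (inv_mem hp)

/-- For `d ≥ 1` with `4 ∤ d`, one has `ℚ(ζ_d - ζ_d⁻¹) = ℚ(ζ_d)` as subfields of `ℚ`. -/
theorem stmt1 (d : ℕ) (hd : 1 ≤ d) (h4 : ¬ (4 ∣ d)) :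
    (ℚ⟮zetaC d - (zetaC d)⁻¹⟯ : IntermediateField ℚ ℂ) = ℚ⟮zetaC d⟯ := by
  have hd0 : (d : ℂ) ≠ 0 := Nat.cast_ne_zero.mpr (by omega)
  apply le_antisymm
  · rw [adjoin_simple_le_iff]
    exact sub_mem (mem_adjoin_simple_self ℚ _) (inv_mem (mem_adjoin_simple_self ℚ _))
  · rw [adjoin_simple_le_iff]
    rcases Nat.even_or_odd d with he | ho
    · -- d even, d = 2m with m odd
      obtain ⟨m, hm⟩ := he
      have hmodd : Odd m := by
        rcases Nat.even_or_odd m with hme | hmo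
        · obtain ⟨k, hk⟩ := hme
          exact absurd ⟨k, by omega⟩ h4
        · exact hmo
      have hzm : (-(zetaC d)) ^ m = 1 := by
        rw [hmodd.neg_pow, zetaC, ← Complex.exp_nat_mul]
        have : (m : ℂ) * (2 * Real.pi * Complex.I / d) = Real.pi * Complex.I := by
          have hmc : (d : ℂ) = 2 * m := by push_cast [hm]; ring
          rw [hmc]
          have hm0 : (m : ℂ) ≠ 0 := by
            intro h; rw [h, mul_zero] at hmc; exact hd0 hmc
          field_simp
        rw [this, Complex.exp_pi_mul_I]
        ring
      have hmem := mem_adjoin_of_odd_root hmodd hzm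
      have hrw : -(zetaC d) - (-(zetaC d))⁻¹ = -(zetaC d - (zetaC d)⁻¹) := by
        rw [inv_neg]; ring
      rw [hrw] at hmem
      have hle : (ℚ⟮-(zetaC d - (zetaC d)⁻¹)⟯ : IntermediateField ℚ ℂ) ≤
          ℚ⟮zetaC d - (zetaC d)⁻¹⟯ := by
        rw [adjoin_simple_le_iff]
        exact neg_mem (mem_adjoin_simple_self ℚ _)
      have hmem2 := neg_mem (hle hmem)
      rwa [neg_neg] at hmem2
    · -- d odd
      apply mem_adjoin_of_odd_root ho
      rw [zetaC, ← Complex.exp_nat_mul]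
      have : (d : ℂ) * (2 * Real.pi * Complex.I / d) = 2 * Real.pi * Complex.I := by
        field_simp
      rw [this, Complex.exp_two_pi_mul_I]
end

section
/- Let d be a positive integer divisible by 4, let ζ = exp(2πi/d) ∈ ℂ, and let n be an integer coprime to d. Then ζ^n − ζ^{−n} = ζ − ζ⁻¹ if and only if n ≡ 1 (mod d) or n ≡ −1 + d/2 (mod d). -/
lemma sub_inv_eq_sub_inv_iff {K : Type*} [Field K] {a b : K} (ha : a ≠ 0) (hb : b ≠ 0) :
    a - a⁻¹ = b - b⁻¹ ↔ a = b ∨ a * b = -1 := by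
  have factor : a - a⁻¹ - (b - b⁻¹) = (a - b) * (a * b + 1) / (a * b) := by
    field_simp
    ring
  rw [← sub_eq_zero, factor, div_eq_zero_iff, or_iff_left (mul_ne_zero ha hb), mul_eq_zero,
    sub_eq_zero, add_eq_zero_iff_eq_neg]

namespace IsPrimitiveRoot

variable {K : Type*} [Field K] {ζ : K} {d : ℕ}

lemma zpow_eq_zpow_iff_modEq (hζ : IsPrimitiveRoot ζ d) (hd : d ≠ 0) {m n : ℤ} :
    ζ ^ m = ζ ^ n ↔ m ≡ n [ZMOD d] := by
  rw [← div_eq_one_iff_eq (zpow_ne_zero n (hζ.ne_zero hd)), ← zpow_sub₀ (hζ.ne_zero hd),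
    hζ.zpow_eq_one_iff_dvd, ← Int.modEq_iff_dvd, Int.modEq_comm]

lemma zpow_half_eq_neg_one (hζ : IsPrimitiveRoot ζ d) (hd : d ≠ 0) (h2 : 2 ∣ d) :
    ζ ^ ((d : ℤ) / 2) = -1 := by
  obtain ⟨e, rfl⟩ := h2
  have he : e ≠ 0 := by omega
  have hsq : IsPrimitiveRoot (ζ ^ e) 2 := by
    simpa [he] using hζ.pow_of_dvd he (dvd_mul_left e 2)
  have : ((2 * e : ℕ) : ℤ) / 2 = (e : ℤ) := by omega
  rw [this, zpow_natCast, hsq.eq_neg_one_of_two_right]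

lemma zpow_sub_zpow_neg_eq_iff (hζ : IsPrimitiveRoot ζ d) (hd : d ≠ 0) (h2 : 2 ∣ d) (n : ℤ) :
    ζ ^ n - ζ ^ (-n) = ζ - ζ⁻¹ ↔ n ≡ 1 [ZMOD d] ∨ n ≡ -1 + (d : ℤ) / 2 [ZMOD d] := by
  have hζ0 := hζ.ne_zero hd
  have hfix : ζ ^ n = ζ ↔ n ≡ 1 [ZMOD d] := by
    rw [← hζ.zpow_eq_zpow_iff_modEq hd, zpow_one]
  have hneg : ζ ^ n * ζ = -1 ↔ n ≡ -1 + (d : ℤ) / 2 [ZMOD d] := by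
    rw [← zpow_add_one₀ hζ0, ← hζ.zpow_half_eq_neg_one hd h2, hζ.zpow_eq_zpow_iff_modEq hd,
      Int.modEq_iff_dvd, Int.modEq_iff_dvd, neg_add_eq_sub, sub_sub, add_comm 1 n]
  rw [zpow_neg, sub_inv_eq_sub_inv_iff (zpow_ne_zero n hζ0) hζ0, hfix, hneg]

end IsPrimitiveRoot

theorem stmt2_general (d : ℕ) (hd : 0 < d) (h4 : 4 ∣ d) (n : ℤ) :
    zetaC d ^ n - zetaC d ^ (-n) = zetaC d - (zetaC d)⁻¹ ↔
      (n ≡ 1 [ZMOD (d : ℤ)] ∨ n ≡ -1 + (d : ℤ) / 2 [ZMOD (d : ℤ)]) :=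
  (Complex.isPrimitiveRoot_exp d hd.ne').zpow_sub_zpow_neg_eq_iff hd.ne'
    ((dvd_mul_right 2 2).trans h4) n

/-- For `4 ∣ d`, `d > 0`, and `n` coprime to `d`, one has
`ζ^n - ζ^{-n} = ζ - ζ⁻¹` iff `n ≡ 1 (mod d)` or `n ≡ -1 + d/2 (mod d)`. -/
theorem stmt2 (d : ℕ) (hd : 0 < d) (h4 : 4 ∣ d) (n : ℤ) (hn : IsCoprime n (d : ℤ)) :
    zetaC d ^ n - zetaC d ^ (-n) = zetaC d - (zetaC d)⁻¹ ↔
      (n ≡ 1 [ZMOD (d : ℤ)] ∨ n ≡ -1 + (d : ℤ) / 2 [ZMOD (d : ℤ)]) :=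
  stmt2_general d hd h4 n
end

section
/- Let e ≥ 2 be an integer and let ζ = exp(2πi/2^e) ∈ ℂ. Then every subfield F of K = ℚ(ζ − ζ⁻¹) with F ≠ K is totally real, i.e., every embedding of F into ℂ has image contained in ℝ. -/
open IntermediateField

/-!
Let `L = ℚ(ζ)`, so that `Gal(L/ℚ) ≅ (ℤ/2^e)ˣ` through `σ ζ = ζ ^ k`. The automorphism
`ζ ↦ ζ ^ w = -ζ⁻¹`, `w = 2^(e-1) - 1`, fixes `ζ - ζ⁻¹`, so the fixing group of a proper subfield
`E ⊊ K = ℚ(ζ - ζ⁻¹)` strictly contains `⟨w⟩`. Such a subgroup contains `-1`: the square roots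
of `1` are `±1, ±w`, and for `x ∉ ⟨w⟩` of order `2^k` the element `y = x ^ 2^(k-1)` of order two
is not `w` (for `k ≥ 2`, `y` is a square and `w` is `1` or `≡ -1 mod 4`), so `-1 ∈ {y, w y}`.
As `-1` acts as complex conjugation, `E ⊆ ℝ`; and `E` is normal over `ℚ` because `L/ℚ` is
abelian, so every embedding of `E` into `ℂ` has image `E`.
-/

lemma Int.two_pow_pred_dvd_sub_one_or_add_one {e : ℕ} (he : 2 ≤ e) {a : ℤ}
    (h : 2 ^ e ∣ a * a - 1) : 2 ^ (e - 1) ∣ a - 1 ∨ 2 ^ (e - 1) ∣ a + 1 := by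
  obtain ⟨b, rfl⟩ : Odd a := by
    have h2 : Even (a * a - 1) := even_iff_two_dvd.2 ((dvd_pow_self 2 (by omega)).trans h)
    exact (Int.odd_mul.1 (Int.not_even_iff_odd.1 (Int.even_sub_one.1 h2))).1
  have hpow : (2 : ℤ) ^ (e - 1) = 2 * 2 ^ (e - 2) := by rw [← pow_succ']; congr 1; omega
  have hb : 2 ^ (e - 2) ∣ b * (b + 1) := by
    have h4 : (2 : ℤ) ^ e = 4 * 2 ^ (e - 2) := by
      rw [show (4 : ℤ) = 2 ^ 2 by norm_num, ← pow_add]; congr 1; omega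
    rw [h4, show (2 * b + 1) * (2 * b + 1) - 1 = 4 * (b * (b + 1)) by ring] at h
    exact (mul_dvd_mul_iff_left four_ne_zero).1 h
  rcases Int.even_or_odd b with hb2 | hb2
  · left
    have := (Int.isCoprime_two_left.2 hb2.add_one).pow_left.dvd_of_dvd_mul_right hb
    rw [hpow, show 2 * b + 1 - 1 = 2 * b by ring]
    exact mul_dvd_mul_left 2 this
  · right
    have := (Int.isCoprime_two_left.2 hb2).pow_left.dvd_of_dvd_mul_left hb
    rw [hpow, show 2 * b + 1 + 1 = 2 * (b + 1) by ring]
    exact mul_dvd_mul_left 2 this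

namespace ZMod

variable {e : ℕ}

lemma two_pow_pred_mul_two (he : 1 ≤ e) : (2 : ZMod (2 ^ e)) ^ (e - 1) * 2 = 0 := by
  rw [← pow_succ, Nat.sub_add_cancel he]
  exact_mod_cast natCast_self (2 ^ e)

lemma two_pow_pred_mul_self (he : 2 ≤ e) :
    (2 : ZMod (2 ^ e)) ^ (e - 1) * 2 ^ (e - 1) = 0 := by
  rw [show e - 1 = (e - 2) + 1 by omega, pow_succ, ← mul_assoc, mul_right_comm,
    ← pow_succ, show e - 2 + 1 = e - 1 by omega, two_pow_pred_mul_two (by omega), zero_mul]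

lemma two_pow_pred_sub_one_mul_self (he : 2 ≤ e) :
    ((2 : ZMod (2 ^ e)) ^ (e - 1) - 1) * (2 ^ (e - 1) - 1) = 1 := by
  linear_combination two_pow_pred_mul_self he - two_pow_pred_mul_two (e := e) (by omega)

lemma two_pow_pred_mul_intCast_eq_zero_or (he : 1 ≤ e) (t : ℤ) :
    (2 : ZMod (2 ^ e)) ^ (e - 1) * t = 0 ∨ (2 : ZMod (2 ^ e)) ^ (e - 1) * t = 2 ^ (e - 1) := by
  rcases Int.even_or_odd' t with ⟨u, rfl | rfl⟩
  · left
    push_cast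
    linear_combination (u : ZMod (2 ^ e)) * two_pow_pred_mul_two he
  · right
    push_cast
    linear_combination (u : ZMod (2 ^ e)) * two_pow_pred_mul_two he

lemma eq_of_mul_self_eq_one_two_pow (he : 2 ≤ e) {y : ZMod (2 ^ e)} (hy : y * y = 1) :
    y = 1 ∨ y = -1 ∨ y = 2 ^ (e - 1) - 1 ∨ y = -(2 ^ (e - 1) - 1) := by
  obtain ⟨a, rfl⟩ := intCast_surjective y
  have hdvd : (2 : ℤ) ^ e ∣ a * a - 1 := by
    have := (intCast_zmod_eq_zero_iff_dvd (a * a - 1) (2 ^ e)).1 (by push_cast; rw [hy]; ring)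
    exact_mod_cast this
  have h2 := two_pow_pred_mul_two (e := e) (by omega)
  rcases Int.two_pow_pred_dvd_sub_one_or_add_one he hdvd with ⟨t, ht⟩ | ⟨t, ht⟩
  · have ha : ((a : ℤ) : ZMod (2 ^ e)) = 2 ^ (e - 1) * t + 1 := by
      rw [show a = 2 ^ (e - 1) * t + 1 by linarith]; push_cast; ring
    rcases two_pow_pred_mul_intCast_eq_zero_or (e := e) (by omega) t with h | h <;> rw [ha, h]
    · exact Or.inl (zero_add 1)
    · exact Or.inr (Or.inr (Or.inr (by linear_combination h2)))
  · have ha : ((a : ℤ) : ZMod (2 ^ e)) = 2 ^ (e - 1) * t - 1 := by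
      rw [show a = 2 ^ (e - 1) * t - 1 by linarith]; push_cast; ring
    rcases two_pow_pred_mul_intCast_eq_zero_or (e := e) (by omega) t with h | h <;> rw [ha, h]
    · exact Or.inr (Or.inl (zero_sub 1))
    · exact Or.inr (Or.inr (Or.inl rfl))

lemma mul_self_ne_two_pow_pred_sub_one (he : 3 ≤ e) (z : ZMod (2 ^ e)) :
    z * z ≠ 2 ^ (e - 1) - 1 := by
  have h4 : 4 ∣ 2 ^ e := pow_dvd_pow 2 (by omega : 2 ≤ e)
  have h0 : (2 : ZMod 4) ^ (e - 1) = 0 := by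
    rw [show e - 1 = 2 + (e - 3) by omega, pow_add, show (2 : ZMod 4) ^ 2 = 0 by decide, zero_mul]
  intro h
  have := congrArg (castHom h4 (ZMod 4)) h
  rw [map_mul, map_sub, map_pow, map_one, map_ofNat, h0] at this
  revert this
  generalize castHom h4 (ZMod 4) z = w
  decide +revert

lemma card_units_two_pow (he : 1 ≤ e) : Fintype.card (ZMod (2 ^ e))ˣ = 2 ^ (e - 1) := by
  rw [card_units_eq_totient, Nat.totient_prime_pow Nat.prime_two he]
  simp

theorem neg_one_mem_of_zpowers_lt (he : 2 ≤ e) {H : Subgroup (ZMod (2 ^ e))ˣ}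
    {w : (ZMod (2 ^ e))ˣ} (hw : (w : ZMod (2 ^ e)) = 2 ^ (e - 1) - 1)
    (hH : Subgroup.zpowers w < H) : -1 ∈ H := by
  obtain ⟨x, hxH, hxw⟩ := SetLike.exists_of_lt hH
  obtain ⟨k, -, hk⟩ := (Nat.dvd_prime_pow Nat.prime_two).1
    (card_units_two_pow (e := e) (by omega) ▸ orderOf_dvd_card (x := x))
  have hk0 : k ≠ 0 := by
    rintro rfl
    exact hxw (orderOf_eq_one_iff.1 hk ▸ one_mem _)
  set y := x ^ 2 ^ (k - 1) with hy
  have hy1 : y ≠ 1 :=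
    pow_ne_one_of_lt_orderOf (by positivity) (hk ▸ Nat.pow_lt_pow_right one_lt_two (by omega))
  have hyy : y * y = 1 := by
    rw [hy, ← pow_add, ← two_mul, ← pow_succ', Nat.sub_add_cancel (by omega), ← hk,
      pow_orderOf_eq_one]
  have hyH : y ∈ H := pow_mem hxH _
  rcases eq_of_mul_self_eq_one_two_pow he (congrArg Units.val hyy) with h | h | h | h
  · exact absurd (Units.ext h) hy1
  · rwa [show (-1 : (ZMod (2 ^ e))ˣ) = y from Units.ext (by simp [h])]
  · exfalso
    have hyw : y = w := Units.ext (h.trans hw.symm)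
    obtain rfl | hk1 : k = 1 ∨ 2 ≤ k := by omega
    · exact hxw (by rw [show x = w by simpa [hy] using hyw]; exact Subgroup.mem_zpowers w)
    obtain rfl | he3 : e = 2 ∨ 3 ≤ e := by omega
    · exact hy1 (Units.ext (by rw [h]; norm_num))
    refine mul_self_ne_two_pow_pred_sub_one he3 ((x ^ 2 ^ (k - 2) : (ZMod (2 ^ e))ˣ) : ZMod _) ?_
    rw [← Units.val_mul, ← pow_add, ← two_mul, ← pow_succ', show k - 2 + 1 = k - 1 by omega, ← h]
  · rw [show (-1 : (ZMod (2 ^ e))ˣ) = w * y from Units.ext (by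
      rw [Units.val_mul, hw, h, mul_neg, two_pow_pred_sub_one_mul_self he, Units.val_neg,
        Units.val_one])]
    exact mul_mem (hH.le (Subgroup.mem_zpowers w)) hyH

end ZMod

open Polynomial

namespace IntermediateField

variable {K L : Type*} [Field K] [Field L] [Algebra K L]

lemma lift_le_lift_iff {F : IntermediateField K L} {E E' : IntermediateField K F} :
    lift E ≤ lift E' ↔ E ≤ E' :=
  ⟨fun h x hx ↦ (mem_lift x).1 (h ((mem_lift x).2 hx)), fun h ↦ map_mono _ h⟩

lemma lift_lt_lift_iff {F : IntermediateField K L} {E E' : IntermediateField K F} :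
    lift E < lift E' ↔ E < E' := by
  simp only [lt_iff_le_not_ge, lift_le_lift_iff]

lemma adjoin_simple_sub_inv_le (x : L) : K⟮x - x⁻¹⟯ ≤ K⟮x⟯ :=
  adjoin_simple_le_iff.2 (sub_mem (mem_adjoin_simple_self K x)
    (inv_mem (mem_adjoin_simple_self K x)))

lemma mem_fixingSubgroup_adjoin_simple_iff {g : Gal(L/K)} {x : L} :
    g ∈ (adjoin K {x}).fixingSubgroup ↔ g x = x := by
  refine ⟨fun h ↦ (mem_fixingSubgroup_iff _ g).1 h x (mem_adjoin_simple_self K x), fun h ↦ ?_⟩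
  have : Subgroup.zpowers g ≤ (adjoin K {x}).fixingSubgroup := by
    rw [← le_iff_le, adjoin_simple_le_iff]
    exact fun g' ↦ (Subgroup.zpowers_le (H := MulAction.stabilizer Gal(L/K) x)).2 h g'.2
  exact this (Subgroup.mem_zpowers g)

end IntermediateField

section Cyclotomic

variable {K L : Type*} [Field K] [Field L] [Algebra K L] {n : ℕ} [NeZero n] {ζ : L}

lemma IsPrimitiveRoot.autToPow_eq_of_apply_eq_pow (hζ : IsPrimitiveRoot ζ n) {g : Gal(L/K)}
    {k : ℕ} (hg : g ζ = ζ ^ k) : (hζ.autToPow K g : ZMod n) = k := by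
  have h := hζ.autToPow_spec K g
  rw [hg, ← pow_mod_orderOf ζ k, ← hζ.eq_orderOf] at h
  rw [← ZMod.natCast_zmod_val (hζ.autToPow K g : ZMod n),
    hζ.pow_inj (ZMod.val_lt _) (Nat.mod_lt _ (NeZero.pos n)) h, ZMod.natCast_mod]

lemma IsPrimitiveRoot.exists_algEquiv_apply_eq [IsCyclotomicExtension {n} K L]
    (h : Irreducible (cyclotomic n K)) (hζ : IsPrimitiveRoot ζ n) {ξ : L}
    (hξ : IsPrimitiveRoot ξ n) : ∃ g : Gal(L/K), g ζ = ξ := by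
  have := IsCyclotomicExtension.neZero' n K L
  refine ⟨(hζ.powerBasis K).equivOfMinpoly (hξ.powerBasis K) ?_, ?_⟩
  · rw [IsPrimitiveRoot.powerBasis_gen, IsPrimitiveRoot.powerBasis_gen,
      ← hζ.minpoly_eq_cyclotomic_of_irreducible h, ← hξ.minpoly_eq_cyclotomic_of_irreducible h]
  · simpa using (hζ.powerBasis K).equivOfMinpoly_gen (hξ.powerBasis K) _

lemma IsPrimitiveRoot.isCyclotomicExtension_adjoin (hζ : IsPrimitiveRoot ζ n) :
    IsCyclotomicExtension {n} K (adjoin K {ζ}) := by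
  change IsCyclotomicExtension {n} K (adjoin K {ζ}).toSubalgebra
  rw [adjoin_simple_toSubalgebra_of_isAlgebraic
    ((hζ.isIntegral (NeZero.pos n)).tower_top (A := K)).isAlgebraic]
  exact hζ.adjoin_isCyclotomicExtension K

lemma IsPrimitiveRoot.normal_of_le_adjoin (hζ : IsPrimitiveRoot ζ n) {E : IntermediateField K L}
    (hE : E ≤ K⟮ζ⟯) : Normal K E :=
  have := hζ.isCyclotomicExtension_adjoin (K := K)
  have := IsCyclotomicExtension.isAbelianGalois {n} K K⟮ζ⟯
  Normal.of_algEquiv (restrictAlgEquiv hE).symm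

end Cyclotomic

section TwoPow

variable {L : Type*} [Field L] {e : ℕ} {ζ : L}

lemma IsPrimitiveRoot.pow_two_pow_pred_eq_neg_one (he : 1 ≤ e) (hζ : IsPrimitiveRoot ζ (2 ^ e)) :
    ζ ^ 2 ^ (e - 1) = -1 := by
  refine IsPrimitiveRoot.eq_neg_one_of_two_right ?_
  have := hζ.pow_of_dvd (p := 2 ^ (e - 1)) (by positivity) (pow_dvd_pow 2 (Nat.sub_le e 1))
  rwa [Nat.pow_div (Nat.sub_le e 1) two_pos, Nat.sub_sub_self he, pow_one] at this

theorem IsPrimitiveRoot.mem_fixingSubgroup_of_lt_adjoin_sub_inv [Algebra ℚ L]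
    [IsCyclotomicExtension {2 ^ e} ℚ L] (he : 2 ≤ e) (hζ : IsPrimitiveRoot ζ (2 ^ e))
    {E : IntermediateField ℚ L} (hE : E < ℚ⟮ζ - ζ⁻¹⟯) {c : Gal(L/ℚ)} (hc : c ζ = ζ⁻¹) :
    c ∈ E.fixingSubgroup := by
  have : IsGalois ℚ L := IsCyclotomicExtension.isGalois {2 ^ e} ℚ L
  have : FiniteDimensional ℚ L := IsCyclotomicExtension.finiteDimensional {2 ^ e} ℚ L
  have hμ := hζ.autToPow_injective ℚ
  set μ := hζ.autToPow ℚ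
  have hpred : ζ ^ (2 ^ (e - 1) - 1) = -ζ⁻¹ := by
    rw [← neg_eq_iff_eq_neg]
    refine eq_inv_of_mul_eq_one_left ?_
    rw [neg_mul, ← pow_succ, Nat.sub_add_cancel Nat.one_le_two_pow,
      hζ.pow_two_pow_pred_eq_neg_one (by omega), neg_neg]
  obtain ⟨s, hs⟩ := hζ.exists_algEquiv_apply_eq (cyclotomic.irreducible_rat (by positivity))
    (hζ.pow_of_coprime (2 ^ (e - 1) - 1) (Nat.Coprime.pow_right _ (Nat.coprime_two_right.2
      (Nat.Even.sub_odd Nat.one_le_two_pow (Nat.even_pow.2 ⟨even_two, by omega⟩) odd_one))))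
  have hsK : s ∈ (ℚ⟮ζ - ζ⁻¹⟯).fixingSubgroup := by
    rw [mem_fixingSubgroup_adjoin_simple_iff, map_sub, map_inv₀, hs, hpred, inv_neg, inv_inv]
    ring
  have hμs : (μ s : ZMod (2 ^ e)) = 2 ^ (e - 1) - 1 := by
    rw [hζ.autToPow_eq_of_apply_eq_pow hs, Nat.cast_sub Nat.one_le_two_pow]
    push_cast
    rfl
  have hμc : μ c = -1 := by
    refine Units.ext ?_
    rw [hζ.autToPow_eq_of_apply_eq_pow (k := 2 ^ e - 1) ?_, Nat.cast_sub Nat.one_le_two_pow]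
    · simp
    · rw [hc]
      exact (eq_inv_of_mul_eq_one_left (by rw [← pow_succ, Nat.sub_add_cancel Nat.one_le_two_pow,
        hζ.pow_eq_one])).symm
  have hlt : Subgroup.zpowers (μ s) < E.fixingSubgroup.map μ :=
    calc Subgroup.zpowers (μ s) = (Subgroup.zpowers s).map μ := (MonoidHom.map_zpowers μ s).symm
      _ ≤ (ℚ⟮ζ - ζ⁻¹⟯).fixingSubgroup.map μ := Subgroup.map_mono (Subgroup.zpowers_le.2 hsK)
      _ < E.fixingSubgroup.map μ := (Subgroup.map_lt_map_iff_of_injective hμ).2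
        (IsGalois.intermediateFieldEquivSubgroup.lt_iff_lt.2 hE)
  obtain ⟨c', hc'E, hc'⟩ := ZMod.neg_one_mem_of_zpowers_lt he hμs hlt
  rwa [hμ (hc'.trans hμc.symm)] at hc'E

end TwoPow

section Complex

open ComplexConjugate

-- A subfield `E` of `ℂ` carries two `ℚ`-algebra structures, `E.algebra'` and
-- `DivisionRing.toRatAlgebra`, equal but not reducibly so. Instance search has to find the
-- first one, which is the one in the general lemmas about intermediate fields.
attribute [local instance high] IntermediateField.algebra'

lemma IntermediateField.exists_algEquiv_coe_apply_eq_conj (L : IntermediateField ℚ ℂ)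
    [Normal ℚ L] : ∃ c : Gal(L/ℚ), ∀ x : L, (c x : ℂ) = conj (x : ℂ) :=
  ⟨_, AlgEquiv.restrictNormal_commutes (Complex.conjAe.restrictScalars ℚ) L⟩

variable {e : ℕ} {ζ : ℂ}

theorem IsPrimitiveRoot.conj_eq_self_of_lt_adjoin_sub_inv (he : 2 ≤ e)
    (hζ : IsPrimitiveRoot ζ (2 ^ e)) {E : IntermediateField ℚ ℂ} (hE : E < ℚ⟮ζ - ζ⁻¹⟯) {z : ℂ}
    (hz : z ∈ E) : conj z = z := by
  have : NeZero (2 ^ e) := ⟨by positivity⟩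
  have : IsCyclotomicExtension {2 ^ e} ℚ ℚ⟮ζ⟯ := hζ.isCyclotomicExtension_adjoin
  have : IsGalois ℚ ℚ⟮ζ⟯ := IsCyclotomicExtension.isGalois {2 ^ e} ℚ ℚ⟮ζ⟯
  set ζL := AdjoinSimple.gen ℚ ζ
  have hζL : IsPrimitiveRoot ζL (2 ^ e) := IsPrimitiveRoot.coe_submonoidClass_iff.1 hζ
  have hEL := hE.le.trans (adjoin_simple_sub_inv_le ζ)
  have hlt : restrict hEL < ℚ⟮ζL - ζL⁻¹⟯ := by
    refine lift_lt_lift_iff.1 ?_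
    rw [lift_restrict, lift_adjoin_simple]
    simpa [ζL] using hE
  obtain ⟨c, hc⟩ := exists_algEquiv_coe_apply_eq_conj ℚ⟮ζ⟯
  have hcζ : c ζL = ζL⁻¹ := Subtype.ext (by
    simp [hc, ζL, Complex.inv_eq_conj (hζ.norm'_eq_one (by positivity))])
  have := (mem_fixingSubgroup_iff _ c).1 (hζL.mem_fixingSubgroup_of_lt_adjoin_sub_inv he hlt hcζ)
    ⟨z, hEL hz⟩ ((mem_restrict hEL _).2 hz)
  simpa [hc] using congrArg Subtype.val this

lemma AlgHom.im_apply_eq_zero_of_normal {E : IntermediateField ℚ ℂ} [Normal ℚ E]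
    (hE : ∀ z ∈ E, conj z = z) (f : E →ₐ[ℚ] ℂ) (x : E) : (f x).im = 0 :=
  Complex.conj_eq_iff_im.1 (hE _ (f.fieldRange_of_normal.le (AlgHom.mem_fieldRange.2 ⟨x, rfl⟩)))

theorem IsPrimitiveRoot.im_apply_eq_zero_of_subfield_ne_top (he : 2 ≤ e)
    (hζ : IsPrimitiveRoot ζ (2 ^ e)) (F : Subfield ℚ⟮ζ - ζ⁻¹⟯) (hF : F ≠ ⊤) (σ : F →+* ℂ)
    (x : F) : (σ x).im = 0 := by
  have : NeZero (2 ^ e) := ⟨by positivity⟩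
  set F' : IntermediateField ℚ ℚ⟮ζ - ζ⁻¹⟯ :=
    F.toIntermediateField fun q ↦
      eq_ratCast (algebraMap ℚ ℚ⟮ζ - ζ⁻¹⟯) q ▸ SubfieldClass.ratCast_mem F q
  have hF'top : F' ≠ ⊤ := fun h ↦ hF (eq_top_iff.2 fun y _ ↦ (h ▸ mem_top : y ∈ F'))
  have hF' : lift F' < ℚ⟮ζ - ζ⁻¹⟯ :=
    (lift_lt_lift_iff.2 (lt_top_iff_ne_top.2 hF'top)).trans_eq (lift_top _ _)
  have := hζ.normal_of_le_adjoin ((lift_le F').trans (adjoin_simple_sub_inv_le ζ))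
  exact AlgHom.im_apply_eq_zero_of_normal
    (fun _ hz ↦ hζ.conj_eq_self_of_lt_adjoin_sub_inv he hF' hz)
    (σ.comp ((liftAlgEquiv F').symm : lift F' →+* F')).toRatAlgHom (liftAlgEquiv F' x)

end Complex

/-- For `e ≥ 2` and `K = ℚ(ζ - ζ⁻¹)` with `ζ = exp(2πi/2^e)`, every proper subfield
of `K` is totally real: each of its embeddings into `ℂ` lands in `ℝ`. -/
theorem stmt6 (e : ℕ) (he : 2 ≤ e) (K : IntermediateField ℚ ℂ)
    (hK : K = ℚ⟮zetaC (2 ^ e) - (zetaC (2 ^ e))⁻¹⟯) :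
    ∀ F : Subfield K, F ≠ ⊤ → ∀ σ : F →+* ℂ, ∀ x : F, (σ x).im = 0 := by
  subst hK
  exact (Complex.isPrimitiveRoot_exp _ (by positivity)).im_apply_eq_zero_of_subfield_ne_top he
end

section
/- Let d ≥ 2 be an even integer and let (φ_d) be the Chebyshev polynomials of the first kind. Let K be a field, x ∈ K nonzero, and set u = x + x⁻¹, v = y·(x+1)·x^{−(1+d/2)} for any y ∈ K with y² = x·(x^{2d} + 1). Then v² = (u + 2)·φ_d(u). Equivalently, x·(x^{2d}+1)·(x+1)²·x^{−(2+d)} = (u+2)·φ_d(u). -/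
/-!
`φ_d` is Mathlib's Vieta–Lucas polynomial `Chebyshev.C`, so `φ_d(x + x⁻¹) = x^d + x^{-d}`.
The identity then factors as `(x + 1)² / x = u + 2` times `(x^{2d} + 1) / x^d = φ_d(u)`;
evenness of `d` is what makes `(x^{1 + d/2})² = x^{2 + d}` in the first form.
-/

open Polynomial

/-- The Chebyshev polynomials of the first kind `φ_d ∈ ℤ[X]`, normalized so that
`φ_0 = 2`, `φ_1 = X`, `φ_{d+2} = X·φ_{d+1} - φ_d`. -/
noncomputable def chebPhi : ℕ → Polynomial ℤ
  | 0 => 2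
  | 1 => X
  | (n + 2) => X * chebPhi (n + 1) - chebPhi n

theorem chebPhi_eq_chebyshev_C : ∀ n : ℕ, chebPhi n = Chebyshev.C ℤ n
  | 0 => by simp [chebPhi]
  | 1 => by simp [chebPhi]
  | n + 2 => by
    rw [chebPhi, chebPhi_eq_chebyshev_C (n + 1), chebPhi_eq_chebyshev_C n]
    exact_mod_cast (Chebyshev.C_add_two ℤ n).symm

theorem aeval_add_chebPhi_of_mul_eq_one {R : Type*} [CommRing R] {x y : R} (h : x * y = 1)
    (n : ℕ) : aeval (x + y) (chebPhi n) = x ^ n + y ^ n := by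
  rw [chebPhi_eq_chebyshev_C, Chebyshev.aeval_C,
    ← dickson_one_one_eq_chebyshev_C, dickson_one_one_eval_add_inv x y h]

theorem mul_pow_two_mul_add_one_div_eq {K : Type*} [Field K] {x : K} (hx : x ≠ 0) (d : ℕ) :
    x * (x ^ (2 * d) + 1) * (x + 1) ^ 2 * (x ^ (2 + d))⁻¹ =
      (x + x⁻¹ + 2) * (x ^ d + x⁻¹ ^ d) := by
  rw [inv_pow]
  field_simp
  ring

theorem stmt12_general (d : ℕ) (hdev : Even d) (K : Type*) [Field K]
    (x : K) (hx : x ≠ 0) (u : K) (hu : u = x + x⁻¹) :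
    (∀ y v : K, y ^ 2 = x * (x ^ (2 * d) + 1) → v = y * (x + 1) * (x ^ (1 + d / 2))⁻¹ →
      v ^ 2 = (u + 2) * Polynomial.aeval u (chebPhi d)) ∧
    x * (x ^ (2 * d) + 1) * (x + 1) ^ 2 * (x ^ (2 + d))⁻¹ =
      (u + 2) * Polynomial.aeval u (chebPhi d) := by
  have key : x * (x ^ (2 * d) + 1) * (x + 1) ^ 2 * (x ^ (2 + d))⁻¹ =
      (u + 2) * Polynomial.aeval u (chebPhi d) := by
    rw [hu, aeval_add_chebPhi_of_mul_eq_one (mul_inv_cancel₀ hx),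
      mul_pow_two_mul_add_one_div_eq hx]
  refine ⟨fun y v hy hv => ?_, key⟩
  have hexp : (1 + d / 2) * 2 = 2 + d := by obtain ⟨k, rfl⟩ := hdev; omega
  rw [← key, hv, mul_pow, mul_pow, hy, inv_pow, ← pow_mul, hexp]

/-- For even `d ≥ 2`: with `u = x + x⁻¹` and `v = y(x+1)x^{-(1+d/2)}` where
`y² = x(x^{2d}+1)`, one has `v² = (u+2)φ_d(u)`; equivalently
`x(x^{2d}+1)(x+1)²x^{-(2+d)} = (u+2)φ_d(u)`. -/
theorem stmt12 (d : ℕ) (hd : 2 ≤ d) (hdev : Even d) (K : Type*) [Field K]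
    (x : K) (hx : x ≠ 0) (u : K) (hu : u = x + x⁻¹) :
    (∀ y v : K, y ^ 2 = x * (x ^ (2 * d) + 1) → v = y * (x + 1) * (x ^ (1 + d / 2))⁻¹ →
      v ^ 2 = (u + 2) * Polynomial.aeval u (chebPhi d)) ∧
    x * (x ^ (2 * d) + 1) * (x + 1) ^ 2 * (x ^ (2 + d))⁻¹ =
      (u + 2) * Polynomial.aeval u (chebPhi d) :=
  stmt12_general d hdev K x hx u hu
end

section
/- Let d ≥ 3 be an odd integer and let (φ_d) be the Chebyshev polynomials of the first kind. Let K be a field, x ∈ K nonzero, and set u = x + x⁻¹, v = y·(1+x)·x^{−(d+1)/2} for any y ∈ K with y² = x^{2d} + 1. Then v² = (u + 2)·φ_d(u). Equivalently, (x^{2d}+1)·(x+1)²·x^{−(d+1)} = (u+2)·φ_d(u). -/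
/-!
Since `φ_d(x + x⁻¹) = x^d + x⁻ᵈ` (the defining recursion is the one satisfied by `x^n + x⁻ⁿ`),
and `x + x⁻¹ + 2 = (x + 1)²/x`, the right-hand side is `(x + 1)²(x^{2d} + 1)/x^{d+1}`.
For odd `d` this is `v²`, because then `2 · ⌊(d + 1)/2⌋ = d + 1`.
-/

open Polynomial

theorem aeval_chebPhi_add_of_mul_eq_one {R : Type*} [CommRing R] {x y : R} (hxy : x * y = 1)
    (n : ℕ) : aeval (x + y) (chebPhi n) = x ^ n + y ^ n := by
  induction n using chebPhi.induct with
  | case1 => simp only [chebPhi, map_ofNat]; ring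
  | case2 => simp [chebPhi]
  | case3 n ih₁ ih₀ =>
    simp only [chebPhi, map_sub, map_mul, aeval_X, ih₁, ih₀, Nat.succ_eq_add_one]
    linear_combination (x ^ n + y ^ n) * hxy

theorem aeval_chebPhi_add_inv {K : Type*} [Field K] {x : K} (hx : x ≠ 0) (n : ℕ) :
    aeval (x + x⁻¹) (chebPhi n) = x ^ n + x⁻¹ ^ n :=
  aeval_chebPhi_add_of_mul_eq_one (mul_inv_cancel₀ hx) n

theorem add_inv_add_two_mul_pow_add_inv_pow {K : Type*} [Field K] {x : K} (hx : x ≠ 0) (n : ℕ) :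
    (x + x⁻¹ + 2) * (x ^ n + x⁻¹ ^ n) = (x ^ (2 * n) + 1) * (x + 1) ^ 2 * (x ^ (n + 1))⁻¹ := by
  rw [inv_pow]
  field_simp
  ring

theorem stmt13_general (d : ℕ) (hdodd : Odd d) (K : Type*) [Field K]
    (x : K) (hx : x ≠ 0) (u : K) (hu : u = x + x⁻¹) :
    (∀ y v : K, y ^ 2 = x ^ (2 * d) + 1 → v = y * (1 + x) * (x ^ ((d + 1) / 2))⁻¹ →
      v ^ 2 = (u + 2) * Polynomial.aeval u (chebPhi d)) ∧
    (x ^ (2 * d) + 1) * (x + 1) ^ 2 * (x ^ (d + 1))⁻¹ =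
      (u + 2) * Polynomial.aeval u (chebPhi d) := by
  have hquot : (x ^ (2 * d) + 1) * (x + 1) ^ 2 * (x ^ (d + 1))⁻¹ =
      (u + 2) * aeval u (chebPhi d) := by
    rw [hu, aeval_chebPhi_add_inv hx, add_inv_add_two_mul_pow_add_inv_pow hx]
  refine ⟨fun y v hy hv => ?_, hquot⟩
  have hhalf : (d + 1) / 2 * 2 = d + 1 := Nat.div_two_mul_two_of_even hdodd.add_one
  rw [hv, ← hquot, mul_pow, mul_pow, hy, inv_pow, ← pow_mul, hhalf]
  ring

/-- For odd `d ≥ 3`: with `u = x + x⁻¹` and `v = y(1+x)x^{-(d+1)/2}` where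
`y² = x^{2d}+1`, one has `v² = (u+2)φ_d(u)`; equivalently
`(x^{2d}+1)(x+1)²x^{-(d+1)} = (u+2)φ_d(u)`. -/
theorem stmt13 (d : ℕ) (hd : 3 ≤ d) (hdodd : Odd d) (K : Type*) [Field K]
    (x : K) (hx : x ≠ 0) (u : K) (hu : u = x + x⁻¹) :
    (∀ y v : K, y ^ 2 = x ^ (2 * d) + 1 → v = y * (1 + x) * (x ^ ((d + 1) / 2))⁻¹ →
      v ^ 2 = (u + 2) * Polynomial.aeval u (chebPhi d)) ∧
    (x ^ (2 * d) + 1) * (x + 1) ^ 2 * (x ^ (d + 1))⁻¹ =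
      (u + 2) * Polynomial.aeval u (chebPhi d) :=
  stmt13_general d hdodd K x hx u hu
end

section
/- Let p ≥ 3 be a prime and let a be an integer coprime to p. If the set {a·1 mod p, a·2 mod p, …, a·((p−1)/2) mod p} equals the set {1 mod p, 2 mod p, …, (p−1)/2 mod p} (as subsets of ℤ/pℤ), then a ≡ 1 (mod p). -/
/-- For an odd prime `p` and `a` coprime to `p`: if multiplication by `a` stabilizes the
set `{1, 2, …, (p-1)/2}` in `ℤ/pℤ`, then `a ≡ 1 (mod p)`. -/
theorem stmt14 (p : ℕ) (hp : p.Prime) (hp3 : 3 ≤ p) (a : ℤ) (ha : IsCoprime a (p : ℤ))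
    (h : ((Finset.Icc 1 ((p - 1) / 2)).image (fun k : ℕ => (k : ZMod p))).image
          (fun i : ZMod p => (a : ZMod p) * i)
        = (Finset.Icc 1 ((p - 1) / 2)).image (fun k : ℕ => (k : ZMod p))) :
    a ≡ 1 [ZMOD (p : ℤ)] := by
  haveI : Fact p.Prime := ⟨hp⟩
  set m := (p - 1) / 2 with hm
  have hodd : p % 2 = 1 := Nat.odd_iff.mp (hp.odd_of_ne_two (by omega))
  have hm1 : 1 ≤ m := by omega
  have hmp : 2 * m + 1 = p := by omega
  -- a is nonzero in ZMod p
  have ha' : (a : ZMod p) ≠ 0 := by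
    rw [Ne, ZMod.intCast_zmod_eq_zero_iff_dvd]
    intro hdvd
    have : IsUnit ((p : ℤ)) := ha.isUnit_of_dvd' hdvd dvd_rfl
    rw [Int.isUnit_iff] at this
    omega
  -- sum of 1..m not divisible by p
  set N := ∑ k ∈ Finset.Icc 1 m, k with hN
  have h2N : 2 * N = m * (m + 1) := by
    have hg := Finset.sum_range_id_mul_two (m + 1)
    have hins : Finset.range (m + 1) = insert 0 (Finset.Icc 1 m) := by
      ext x; simp; omega
    rw [hins, Finset.sum_insert (by simp)] at hg
    simp at hg
    rw [hN, mul_comm m (m + 1), ← hg]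
    ring
  have hpN : ¬ (p ∣ N) := by
    intro hdvd
    have : p ∣ m * (m + 1) := by
      have h2 : p ∣ 2 * N := hdvd.mul_left 2
      rwa [h2N] at h2
    rcases (hp.dvd_mul.mp this) with h1 | h1
    · have := Nat.le_of_dvd (by omega) h1; omega
    · have := Nat.le_of_dvd (by omega) h1; omega
  -- cast injective on Icc 1 m
  have hinj : Set.InjOn (fun k : ℕ => (k : ZMod p)) (Finset.Icc 1 m) := by
    intro x hx y hy hxy
    simp only [Finset.coe_Icc, Set.mem_Icc] at hx hy
    have hxp : x < p := by omega
    have hyp : y < p := by omega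
    have := congrArg ZMod.val hxy
    rwa [ZMod.val_cast_of_lt hxp, ZMod.val_cast_of_lt hyp] at this
  set S := (Finset.Icc 1 m).image (fun k : ℕ => (k : ZMod p)) with hS
  have hSsum : ∑ i ∈ S, i = (N : ZMod p) := by
    rw [hS, Finset.sum_image hinj, hN]
    push_cast
    rfl
  have hsum2 : ∑ i ∈ S.image (fun i : ZMod p => (a : ZMod p) * i), i
      = (a : ZMod p) * ∑ i ∈ S, i := by
    rw [Finset.sum_image (fun x _ y _ hxy => mul_left_cancel₀ ha' hxy), Finset.mul_sum]
  have key : (a : ZMod p) * (N : ZMod p) = (N : ZMod p) := by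
    have := congrArg (fun t => ∑ i ∈ t, i) h
    simpa [hsum2, hSsum] using this
  have hNne : (N : ZMod p) ≠ 0 := by
    rw [Ne, ZMod.natCast_eq_zero_iff]
    exact hpN
  have : (a : ZMod p) = 1 := by
    have := mul_right_cancel₀ hNne (key.trans (one_mul (N : ZMod p)).symm)
    exact this
  exact (ZMod.intCast_eq_intCast_iff a 1 p).mp (by simpa using this)
end
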